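/- arXiv:quant-ph/0101033 — 3 statements merged into one kernel-verified Lean document; each statement's English description precedes it below -/
import Mathlib

section
/- Let ρ be an invertible density matrix on H1⊗H2 and define the map E as above and the scalar product ⟨⟨A,B⟩⟩ := Tr(ρ^{1/2} A* ρ^{1/2} B) on bounded operators. Then the generator L(A) = E(A) − A is self-adjoint with respect to this scalar product: ⟨⟨L(A), B⟩⟩ = ⟨⟨A, L(B)⟩⟩ for all A, B. -/
open Matrix Kronecker
open scoped ComplexOrder

/-- Partial trace over the first tensor factor. -/
noncomputable def ptrace1 {n m : ℕ} (M : Matrix (Fin n × Fin m) (Fin n × Fin m) ℂ) :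
    Matrix (Fin m) (Fin m) ℂ :=
  fun j i => ∑ k : Fin n, M (k, j) (k, i)

/-- Tensor product of vectors. -/
noncomputable def vecTens {n m : ℕ} (x : Fin n → ℂ) (y : Fin m → ℂ) : Fin n × Fin m → ℂ :=
  fun p => x p.1 * y p.2

/-- Rank-one operator `|y⟩⟨z|`. -/
noncomputable def ketbra {d : Type*} (y z : d → ℂ) : Matrix d d ℂ :=
  fun a b => y a * star (z b)

/-- `γ = ρ^{1/2} (1 ⊗ (Tr₁ρ))^{-1/2}`, given `s = ρ^{1/2}` and `w = (Tr₁ρ)^{-1/2}`. -/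
noncomputable def gammaOp {n m : ℕ} (s : Matrix (Fin n × Fin m) (Fin n × Fin m) ℂ)
    (w : Matrix (Fin m) (Fin m) ℂ) : Matrix (Fin n × Fin m) (Fin n × Fin m) ℂ :=
  s * ((1 : Matrix (Fin n) (Fin n) ℂ) ⊗ₖ w)

/-- The generalized conditional expectation `E(A) = 1 ⊗ Tr₁(γ* A γ)`. -/
noncomputable def Emap {n m : ℕ} (s : Matrix (Fin n × Fin m) (Fin n × Fin m) ℂ)
    (w : Matrix (Fin m) (Fin m) ℂ) (A : Matrix (Fin n × Fin m) (Fin n × Fin m) ℂ) :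
    Matrix (Fin n × Fin m) (Fin n × Fin m) ℂ :=
  (1 : Matrix (Fin n) (Fin n) ℂ) ⊗ₖ ptrace1 ((gammaOp s w)ᴴ * A * gammaOp s w)

lemma ptrace1_conjTranspose {n m : ℕ} (M : Matrix (Fin n × Fin m) (Fin n × Fin m) ℂ) :
    ptrace1 Mᴴ = (ptrace1 M)ᴴ := by
  ext j i
  simp [ptrace1, Matrix.conjTranspose_apply]

lemma one_kron_conjTranspose {n m : ℕ} (Y : Matrix (Fin m) (Fin m) ℂ) :
    ((1 : Matrix (Fin n) (Fin n) ℂ) ⊗ₖ Y)ᴴ = (1 : Matrix (Fin n) (Fin n) ℂ) ⊗ₖ Yᴴ := by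
  ext ⟨a, b⟩ ⟨c, d⟩
  simp only [Matrix.conjTranspose_apply, Matrix.kroneckerMap_apply, Matrix.one_apply,
    star_mul', eq_comm]
  by_cases h : a = c <;> simp [h, eq_comm]

lemma trace_mul_one_kron {n m : ℕ} (M : Matrix (Fin n × Fin m) (Fin n × Fin m) ℂ)
    (Y : Matrix (Fin m) (Fin m) ℂ) :
    (M * ((1 : Matrix (Fin n) (Fin n) ℂ) ⊗ₖ Y)).trace = (ptrace1 M * Y).trace := by
  simp only [Matrix.trace, Matrix.diag, Matrix.mul_apply, ptrace1, Matrix.kroneckerMap_apply,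
    Matrix.one_apply, Fintype.sum_prod_type]
  simp only [ite_mul, one_mul, zero_mul, mul_ite, mul_zero, Finset.sum_ite_irrel,
    Finset.sum_const_zero, Finset.sum_ite_eq', Finset.mem_univ, ↓reduceIte, Finset.sum_mul]
  rw [Finset.sum_comm]
  exact Finset.sum_congr rfl fun j _ => Finset.sum_comm

lemma one_kron_mul_one_kron {n m : ℕ} (Y Z : Matrix (Fin m) (Fin m) ℂ) :
    ((1 : Matrix (Fin n) (Fin n) ℂ) ⊗ₖ Y) * ((1 : Matrix (Fin n) (Fin n) ℂ) ⊗ₖ Z)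
      = (1 : Matrix (Fin n) (Fin n) ℂ) ⊗ₖ (Y * Z) := by
  rw [← Matrix.mul_kronecker_mul, one_mul]

/-- the generator `L(A) = E(A) − A` is self-adjoint for the KMS scalar
product `⟨⟨A,B⟩⟩ = Tr(ρ^{1/2} A* ρ^{1/2} B)`. -/
theorem generator_selfAdjoint_KMS {n m : ℕ}
    (ρ s : Matrix (Fin n × Fin m) (Fin n × Fin m) ℂ) (w : Matrix (Fin m) (Fin m) ℂ)
    (hρ : ρ.PosDef) (htr : ρ.trace = 1)
    (hs : s.PosSemidef) (hss : s * s = ρ)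
    (hw : w.PosSemidef) (hww : w * w * ptrace1 ρ = 1) :
    ∀ A B : Matrix (Fin n × Fin m) (Fin n × Fin m) ℂ,
      (s * (Emap s w A - A)ᴴ * s * B).trace = (s * Aᴴ * s * (Emap s w B - B)).trace := by
  have hsH : sᴴ = s := hs.1
  have hwH : wᴴ = w := hw.1
  set u : Matrix (Fin m) (Fin m) ℂ := w * ptrace1 ρ with hu
  have hwu : w * u = 1 := by rw [hu, ← mul_assoc]; exact hww
  have huw : u * w = 1 := mul_eq_one_comm.mp hwu
  set γ := gammaOp s w with hγ
  -- s = γ * (1 ⊗ u)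
  have h1 : γ * ((1 : Matrix (Fin n) (Fin n) ℂ) ⊗ₖ u) = s := by
    rw [hγ, gammaOp, mul_assoc, one_kron_mul_one_kron, hwu, Matrix.one_kronecker_one, mul_one]
  -- s = (1 ⊗ u) * γᴴ
  have hγH : γᴴ = ((1 : Matrix (Fin n) (Fin n) ℂ) ⊗ₖ w) * s := by
    rw [hγ, gammaOp, Matrix.conjTranspose_mul, hsH, one_kron_conjTranspose, hwH]
  have h2 : ((1 : Matrix (Fin n) (Fin n) ℂ) ⊗ₖ u) * γᴴ = s := by
    rw [hγH, ← mul_assoc, one_kron_mul_one_kron, huw, Matrix.one_kronecker_one, one_mul]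
  -- key identity
  have key : ∀ P Q : Matrix (Fin n × Fin m) (Fin n × Fin m) ℂ,
      (s * (Emap s w P)ᴴ * s * Q).trace = (s * Pᴴ * s * Emap s w Q).trace := by
    intro P Q
    set X := ptrace1 (γᴴ * P * γ) with hX
    set Z := ptrace1 (γᴴ * Q * γ) with hZ
    have hXH : ptrace1 (γᴴ * Pᴴ * γ) = Xᴴ := by
      rw [hX, ← ptrace1_conjTranspose]
      congr 1
      simp [Matrix.conjTranspose_mul, mul_assoc]
    have hEP : (Emap s w P)ᴴ = (1 : Matrix (Fin n) (Fin n) ℂ) ⊗ₖ Xᴴ := by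
      rw [Emap, ← hγ, ← hX, one_kron_conjTranspose]
    -- sandwich lemma
    have sand : ∀ Y : Matrix (Fin m) (Fin m) ℂ,
        s * ((1 : Matrix (Fin n) (Fin n) ℂ) ⊗ₖ Y) * s
          = γ * ((1 : Matrix (Fin n) (Fin n) ℂ) ⊗ₖ (u * Y * u)) * γᴴ := by
      intro Y
      nth_rw 2 [← h2]
      nth_rw 1 [← h1]
      simp only [← one_kron_mul_one_kron]
      simp only [mul_assoc]
    -- generic trace collapsing
    have tr1 : ∀ (M : Matrix (Fin n × Fin m) (Fin n × Fin m) ℂ) (Y : Matrix (Fin m) (Fin m) ℂ),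
        (γ * ((1 : Matrix (Fin n) (Fin n) ℂ) ⊗ₖ Y) * γᴴ * M).trace
          = (ptrace1 (γᴴ * M * γ) * Y).trace := by
      intro M Y
      calc (γ * ((1 : Matrix (Fin n) (Fin n) ℂ) ⊗ₖ Y) * γᴴ * M).trace
          = ((γ * ((1 : Matrix (Fin n) (Fin n) ℂ) ⊗ₖ Y)) * (γᴴ * M)).trace := by
            rw [mul_assoc]
        _ = ((γᴴ * M) * (γ * ((1 : Matrix (Fin n) (Fin n) ℂ) ⊗ₖ Y))).trace :=
            Matrix.trace_mul_comm _ _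
        _ = ((γᴴ * M * γ) * ((1 : Matrix (Fin n) (Fin n) ℂ) ⊗ₖ Y)).trace := by
            rw [← mul_assoc]
        _ = (ptrace1 (γᴴ * M * γ) * Y).trace := trace_mul_one_kron _ _
    have hL : (s * (Emap s w P)ᴴ * s * Q).trace = (Z * (u * Xᴴ * u)).trace := by
      rw [hEP, sand, tr1, ← hZ, Matrix.trace_mul_comm]
    have hR : (s * Pᴴ * s * Emap s w Q).trace = (Xᴴ * (u * Z * u)).trace := by
      calc (s * Pᴴ * s * Emap s w Q).trace
          = ((s * Pᴴ) * (s * Emap s w Q)).trace := by rw [mul_assoc]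
        _ = ((s * Emap s w Q) * (s * Pᴴ)).trace := Matrix.trace_mul_comm _ _
        _ = ((s * Emap s w Q * s) * Pᴴ).trace := by rw [← mul_assoc]
        _ = (γ * ((1 : Matrix (Fin n) (Fin n) ℂ) ⊗ₖ (u * Z * u)) * γᴴ * Pᴴ).trace := by
            rw [Emap, ← hγ, ← hZ, sand]
        _ = (ptrace1 (γᴴ * Pᴴ * γ) * (u * Z * u)).trace := tr1 _ _
        _ = (Xᴴ * (u * Z * u)).trace := by rw [hXH]
    have cyc : (Z * (u * Xᴴ * u)).trace = (Xᴴ * (u * Z * u)).trace := by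
      rw [show Z * (u * Xᴴ * u) = Z * u * Xᴴ * u by noncomm_ring,
        Matrix.trace_mul_cycle,
        show u * (Z * u) * Xᴴ = u * Z * u * Xᴴ by noncomm_ring,
        Matrix.trace_mul_comm]
    rw [hL, hR, cyc]
  intro A B
  simp only [Matrix.conjTranspose_sub, Matrix.sub_mul, Matrix.mul_sub, Matrix.trace_sub]
  rw [key A B]
end

section
/- Let ρ = Σ_{i=1}^4 λ_i|x_i⟩⟨x_i| on ℂ²⊗ℂ² (Bell-type basis x1,...,x4 as in the block spin-flip model) with λ_i > 0, Σλ_i = 1, λ2 = λ3, and λ1 > λ4. Let σ = σ^I ⊗ (a|ξ1⟩⟨ξ1| + b|ξ2⟩⟨ξ2|) with a,b ≥ 0, a+b=1. Then the operator E^d_0(σ) := λ̃1|y1⟩⟨y1| + λ̃4|y4⟩⟨y4| (the part of E^d(σ) supported on span{ξ1⊗ξ1, ξ2⊗ξ2}) satisfies ⟨ξ2⊗ξ2, E^d_0(σ) ξ1⊗ξ1⟩ ≠ 0, hence E^d_0(σ) is not a separable operator: it is not in the closed convex hull of products of positive operators A⊗B. -/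
open Matrix Kronecker
open scoped ComplexOrder

/-- The Bell-type basis `x1,x2,x3,x4` built from an orthonormal basis `ξ` of `ℂ²`. -/
noncomputable def bellBasis (ξ : Fin 2 → Fin 2 → ℂ) : Fin 4 → (Fin 2 × Fin 2 → ℂ) :=
  ![fun p => ((Real.sqrt 2 : ℝ) : ℂ)⁻¹ *
      (vecTens (ξ 0) (ξ 0) p + vecTens (ξ 1) (ξ 1) p),
    vecTens (ξ 0) (ξ 1),
    vecTens (ξ 1) (ξ 0),
    fun p => ((Real.sqrt 2 : ℝ) : ℂ)⁻¹ *
      (vecTens (ξ 0) (ξ 0) p - vecTens (ξ 1) (ξ 1) p)]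

/-- The density matrix `ρ = Σ λᵢ |xᵢ⟩⟨xᵢ|`. -/
noncomputable def rhoBell (ξ : Fin 2 → Fin 2 → ℂ) (lam : Fin 4 → ℝ) :
    Matrix (Fin 2 × Fin 2) (Fin 2 × Fin 2) ℂ :=
  ∑ i : Fin 4, ((lam i : ℝ) : ℂ) • ketbra (bellBasis ξ i) (bellBasis ξ i)

noncomputable def Aq (lam : Fin 4 → ℝ) (a b : ℝ) : ℝ :=
  a * (Real.sqrt (lam 0) + Real.sqrt (lam 3)) ^ 2 +
    b * (Real.sqrt (lam 0) - Real.sqrt (lam 3)) ^ 2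

noncomputable def Bq (lam : Fin 4 → ℝ) : ℝ := lam 0 - lam 3

noncomputable def Cq (lam : Fin 4 → ℝ) (a b : ℝ) : ℝ :=
  a * (Real.sqrt (lam 0) - Real.sqrt (lam 3)) ^ 2 +
    b * (Real.sqrt (lam 0) + Real.sqrt (lam 3)) ^ 2

noncomputable def Xq (lam : Fin 4 → ℝ) (a b : ℝ) : ℝ :=
  Real.sqrt ((Aq lam a b - Cq lam a b) ^ 2 + 4 * Bq lam ^ 2)

/-- `χ = ((λ1+λ4)/2 + λ2)⁻¹` (with `λ2 = λ3`). -/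
noncomputable def chiq (lam : Fin 4 → ℝ) : ℝ := ((lam 0 + lam 3) / 2 + lam 1)⁻¹

noncomputable def lamPlus (lam : Fin 4 → ℝ) (a b : ℝ) : ℝ :=
  (Aq lam a b + Cq lam a b + Xq lam a b) / 2

noncomputable def lamMinus (lam : Fin 4 → ℝ) (a b : ℝ) : ℝ :=
  (Aq lam a b + Cq lam a b - Xq lam a b) / 2

noncomputable def etaPlus (lam : Fin 4 → ℝ) (a b : ℝ) : ℝ :=
  Real.sqrt 2 * Bq lam /
    Real.sqrt (Xq lam a b ^ 2 - (Aq lam a b - Cq lam a b) * Xq lam a b)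

noncomputable def kappaPlus (lam : Fin 4 → ℝ) (a b : ℝ) : ℝ :=
  (-(Aq lam a b - Cq lam a b) + Xq lam a b) /
    (Real.sqrt 2 * Real.sqrt (Xq lam a b ^ 2 - (Aq lam a b - Cq lam a b) * Xq lam a b))

noncomputable def etaMinus (lam : Fin 4 → ℝ) (a b : ℝ) : ℝ :=
  Real.sqrt 2 * Bq lam /
    Real.sqrt (Xq lam a b ^ 2 + (Aq lam a b - Cq lam a b) * Xq lam a b)

noncomputable def kappaMinus (lam : Fin 4 → ℝ) (a b : ℝ) : ℝ :=
  (-(Aq lam a b - Cq lam a b) - Xq lam a b) /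
    (Real.sqrt 2 * Real.sqrt (Xq lam a b ^ 2 + (Aq lam a b - Cq lam a b) * Xq lam a b))

/-- `y1 = η₊ ξ1⊗ξ1 + κ₊ ξ2⊗ξ2`. -/
noncomputable def y1v (ξ : Fin 2 → Fin 2 → ℂ) (lam : Fin 4 → ℝ) (a b : ℝ) :
    Fin 2 × Fin 2 → ℂ :=
  fun p => ((etaPlus lam a b : ℝ) : ℂ) * vecTens (ξ 0) (ξ 0) p +
    ((kappaPlus lam a b : ℝ) : ℂ) * vecTens (ξ 1) (ξ 1) p

/-- `y4 = η₋ ξ1⊗ξ1 + κ₋ ξ2⊗ξ2`. -/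
noncomputable def y4v (ξ : Fin 2 → Fin 2 → ℂ) (lam : Fin 4 → ℝ) (a b : ℝ) :
    Fin 2 × Fin 2 → ℂ :=
  fun p => ((etaMinus lam a b : ℝ) : ℂ) * vecTens (ξ 0) (ξ 0) p +
    ((kappaMinus lam a b : ℝ) : ℂ) * vecTens (ξ 1) (ξ 1) p

/-- `E^d_0(σ) = λ̃1 |y1⟩⟨y1| + λ̃4 |y4⟩⟨y4|` with `λ̃1 = χλ₊`, `λ̃4 = χλ₋`. -/
noncomputable def Ed0 (ξ : Fin 2 → Fin 2 → ℂ) (lam : Fin 4 → ℝ) (a b : ℝ) :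
    Matrix (Fin 2 × Fin 2) (Fin 2 × Fin 2) ℂ :=
  ((chiq lam * lamPlus lam a b : ℝ) : ℂ) •
      ketbra (y1v ξ lam a b) (y1v ξ lam a b) +
    ((chiq lam * lamMinus lam a b : ℝ) : ℂ) •
      ketbra (y4v ξ lam a b) (y4v ξ lam a b)

/-- The set of separable operators: closure of finite sums `Σ Aⱼ⊗Bⱼ` with `Aⱼ, Bⱼ ≥ 0`. -/
noncomputable def SepCl : Set (Matrix (Fin 2 × Fin 2) (Fin 2 × Fin 2) ℂ) :=
  closure {S | ∃ (N : ℕ) (A B : Fin N → Matrix (Fin 2) (Fin 2) ℂ),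
    (∀ j, (A j).PosSemidef) ∧ (∀ j, (B j).PosSemidef) ∧ S = ∑ j, A j ⊗ₖ B j}

/-! Both claims rest on one identity: the spectral decomposition `λ₊ y₁y₁ᵀ + λ₋ y₄y₄ᵀ` of the
real symmetric matrix `[[A, B], [B, C]]` reproduces its off-diagonal entry `B`, so the
`(ξ₂ ⊗ ξ₂, ξ₁ ⊗ ξ₁)` entry of `E^d_0(σ)` is `χB > 0`. Non-separability is the Peres–Horodecki
criterion: partial transposition sends `A ⊗ B` to `Aᵀ ⊗ B`, so separable operators have positive
semidefinite partial transpose, whereas the partial transpose of `E^d_0(σ)`, an operator on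
`span {ξ₁ ⊗ ξ₁, ξ₂ ⊗ ξ₂}`, has expectation `-2χB` in `ξ̄₁ ⊗ ξ₂ - ξ̄₂ ⊗ ξ₁`. -/

section SpectralCoefficients

lemma sqrt_two_mul_div_sqrt_mul_div (B Q : ℝ) {P : ℝ} (hP : 0 ≤ P) :
    √2 * B / √P * (Q / (√2 * √P)) = B * Q / P := by
  have h2 : √2 ≠ 0 := by positivity
  rw [div_mul_div_comm, mul_left_comm (√P), Real.mul_self_sqrt hP, mul_assoc,
    mul_div_mul_left _ _ h2]

variable (lam : Fin 4 → ℝ) (a b : ℝ)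

lemma abs_sub_lt_Xq (hB : Bq lam ≠ 0) : |Aq lam a b - Cq lam a b| < Xq lam a b := by
  rw [Xq, Real.lt_sqrt (abs_nonneg _), sq_abs]
  have := pow_pos (abs_pos.2 hB) 2
  rw [sq_abs] at this
  linarith

lemma etaPlus_mul_kappaPlus (hB : Bq lam ≠ 0) :
    etaPlus lam a b * kappaPlus lam a b = Bq lam / Xq lam a b := by
  have hlt := abs_lt.1 (abs_sub_lt_Xq lam a b hB)
  have hD : 0 < Xq lam a b - (Aq lam a b - Cq lam a b) := by linarith
  have hX : 0 < Xq lam a b := by linarith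
  rw [etaPlus, kappaPlus, sqrt_two_mul_div_sqrt_mul_div _ _ (by nlinarith)]
  field_simp
  ring

lemma etaMinus_mul_kappaMinus (hB : Bq lam ≠ 0) :
    etaMinus lam a b * kappaMinus lam a b = -(Bq lam / Xq lam a b) := by
  have hlt := abs_lt.1 (abs_sub_lt_Xq lam a b hB)
  have hD : 0 < Xq lam a b + (Aq lam a b - Cq lam a b) := by linarith
  have hX : 0 < Xq lam a b := by linarith
  rw [etaMinus, kappaMinus, sqrt_two_mul_div_sqrt_mul_div _ _ (by nlinarith)]
  field_simp
  ring

lemma lamPlus_mul_add_lamMinus_mul (hB : Bq lam ≠ 0) :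
    lamPlus lam a b * (etaPlus lam a b * kappaPlus lam a b)
      + lamMinus lam a b * (etaMinus lam a b * kappaMinus lam a b) = Bq lam := by
  have hX : Xq lam a b ≠ 0 := (abs_nonneg _).trans_lt (abs_sub_lt_Xq lam a b hB) |>.ne'
  rw [etaPlus_mul_kappaPlus lam a b hB, etaMinus_mul_kappaMinus lam a b hB, lamPlus, lamMinus]
  field_simp
  ring

end SpectralCoefficients

section TensorVectors

lemma star_vecTens_dotProduct_vecTens {n m : ℕ} (x z : Fin n → ℂ) (y w : Fin m → ℂ) :
    star (vecTens x y) ⬝ᵥ vecTens z w = (star x ⬝ᵥ z) * (star y ⬝ᵥ w) := by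
  simp only [dotProduct, Finset.sum_mul_sum, Fintype.sum_prod_type, vecTens, Pi.star_apply,
    star_mul']
  refine Finset.sum_congr rfl fun _ _ => Finset.sum_congr rfl fun _ _ => by ring

lemma ketbra_mulVec {d : Type*} [Fintype d] (y z w : d → ℂ) :
    ketbra y z *ᵥ w = (star z ⬝ᵥ w) • y := by
  ext i
  simp only [mulVec, dotProduct, ketbra, Pi.smul_apply, smul_eq_mul, Pi.star_apply,
    Finset.sum_mul]
  exact Finset.sum_congr rfl fun _ _ => by ring

lemma star_vecTens_dotProduct_diagonal {ξ : Fin 2 → Fin 2 → ℂ}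
    (hξ : ∀ i j, (∑ k, star (ξ i k) * ξ j k) = if i = j then 1 else 0) (η κ : ℂ) (i j : Fin 2) :
    star (vecTens (ξ i) (ξ j)) ⬝ᵥ
        (fun p => η * vecTens (ξ 0) (ξ 0) p + κ * vecTens (ξ 1) (ξ 1) p) =
      diagonal ![η, κ] i j := by
  change star (vecTens (ξ i) (ξ j)) ⬝ᵥ (η • vecTens (ξ 0) (ξ 0) + κ • vecTens (ξ 1) (ξ 1)) = _
  simp only [dotProduct_add, dotProduct_smul, star_vecTens_dotProduct_vecTens, smul_eq_mul]
  have h : ∀ i j, star (ξ i) ⬝ᵥ ξ j = if i = j then 1 else 0 := hξ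
  fin_cases i <;> fin_cases j <;> simp [h]

end TensorVectors

section PartialTranspose

variable {ι κ R : Type*}

def partialTranspose (M : Matrix (ι × κ) (ι × κ) R) : Matrix (ι × κ) (ι × κ) R :=
  of fun p q => M (q.1, p.2) (p.1, q.2)

lemma partialTranspose_kronecker [Mul R] (A : Matrix ι ι R) (B : Matrix κ κ R) :
    partialTranspose (A ⊗ₖ B) = Aᵀ ⊗ₖ B := by
  ext p q
  rfl

lemma partialTranspose_sum [AddCommMonoid R] {α : Type*} (s : Finset α)
    (M : α → Matrix (ι × κ) (ι × κ) R) :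
    partialTranspose (∑ j ∈ s, M j) = ∑ j ∈ s, partialTranspose (M j) := by
  ext p q
  simp [partialTranspose, Matrix.sum_apply]

lemma posSemidef_partialTranspose_sum_kronecker [Fintype ι] [Fintype κ] {N : ℕ}
    {A : Fin N → Matrix ι ι ℂ} {B : Fin N → Matrix κ κ ℂ}
    (hA : ∀ j, (A j).PosSemidef) (hB : ∀ j, (B j).PosSemidef) :
    (partialTranspose (∑ j, A j ⊗ₖ B j)).PosSemidef := by
  rw [partialTranspose_sum]
  exact posSemidef_sum _ fun j _ => by
    rw [partialTranspose_kronecker]; exact (hA j).transpose.kronecker (hB j)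

lemma star_vecTens_dotProduct_partialTranspose_mulVec {n m : ℕ}
    (S : Matrix (Fin n × Fin m) (Fin n × Fin m) ℂ) (x z : Fin n → ℂ) (y t : Fin m → ℂ) :
    star (vecTens (star x) y) ⬝ᵥ partialTranspose S *ᵥ vecTens (star z) t =
      star (vecTens z y) ⬝ᵥ S *ᵥ vecTens x t := by
  simp only [dotProduct, mulVec, Fintype.sum_prod_type, Finset.mul_sum, vecTens, partialTranspose,
    of_apply, Pi.star_apply, star_mul', star_star]
  conv_lhs => enter [2, p₁]; rw [Finset.sum_comm]
  rw [Finset.sum_comm]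
  conv_lhs => enter [2, q₁]; rw [Finset.sum_comm]
  refine Finset.sum_congr rfl fun _ _ => Finset.sum_congr rfl fun _ _ =>
    Finset.sum_congr rfl fun _ _ => Finset.sum_congr rfl fun _ _ => by ring

end PartialTranspose

section FlipWitness

variable {n : ℕ}

noncomputable def flipWitness (x y : Fin n → ℂ)
    (S : Matrix (Fin n × Fin n) (Fin n × Fin n) ℂ) : ℂ :=
  star (vecTens x y) ⬝ᵥ S *ᵥ vecTens x y + star (vecTens y x) ⬝ᵥ S *ᵥ vecTens y x
    - star (vecTens y y) ⬝ᵥ S *ᵥ vecTens x x - star (vecTens x x) ⬝ᵥ S *ᵥ vecTens y y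

lemma flipWitness_eq_partialTranspose (x y : Fin n → ℂ)
    (S : Matrix (Fin n × Fin n) (Fin n × Fin n) ℂ) :
    flipWitness x y S =
      star (vecTens (star x) y - vecTens (star y) x) ⬝ᵥ
        partialTranspose S *ᵥ (vecTens (star x) y - vecTens (star y) x) := by
  simp only [star_sub, mulVec_sub, dotProduct_sub, sub_dotProduct,
    star_vecTens_dotProduct_partialTranspose_mulVec, flipWitness]
  ring

lemma continuous_flipWitness (x y : Fin n → ℂ) : Continuous (flipWitness x y) := by
  unfold flipWitness
  fun_prop

lemma re_flipWitness_nonneg_of_mem_SepCl {S : Matrix (Fin 2 × Fin 2) (Fin 2 × Fin 2) ℂ}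
    (hS : S ∈ SepCl) (x y : Fin 2 → ℂ) : 0 ≤ (flipWitness x y S).re := by
  refine closure_minimal ?_
    (isClosed_le continuous_const (Complex.continuous_re.comp (continuous_flipWitness x y))) hS
  rintro _ ⟨N, A, B, hA, hB, rfl⟩
  rw [Set.mem_ofPred_eq, Function.comp_apply, flipWitness_eq_partialTranspose]
  exact (posSemidef_partialTranspose_sum_kronecker hA hB).re_dotProduct_nonneg _

end FlipWitness

section EntriesOfEd0

variable {ξ : Fin 2 → Fin 2 → ℂ} {lam : Fin 4 → ℝ} {a b : ℝ}

lemma star_vecTens_dotProduct_Ed0_mulVec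
    (hξ : ∀ i j, (∑ k, star (ξ i k) * ξ j k) = if i = j then 1 else 0) (i j k l : Fin 2) :
    star (vecTens (ξ i) (ξ j)) ⬝ᵥ Ed0 ξ lam a b *ᵥ vecTens (ξ k) (ξ l) =
      ((chiq lam * lamPlus lam a b : ℝ) : ℂ) *
          (star (diagonal ![(etaPlus lam a b : ℂ), kappaPlus lam a b] k l) *
            diagonal ![(etaPlus lam a b : ℂ), kappaPlus lam a b] i j) +
        ((chiq lam * lamMinus lam a b : ℝ) : ℂ) *
          (star (diagonal ![(etaMinus lam a b : ℂ), kappaMinus lam a b] k l) *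
            diagonal ![(etaMinus lam a b : ℂ), kappaMinus lam a b] i j) := by
  rw [Ed0, add_mulVec, smul_mulVec, smul_mulVec, ketbra_mulVec, ketbra_mulVec, dotProduct_add,
    dotProduct_smul, dotProduct_smul, dotProduct_smul, dotProduct_smul,
    star_dotProduct (y1v ξ lam a b), star_dotProduct (y4v ξ lam a b)]
  unfold y1v y4v
  simp only [star_vecTens_dotProduct_diagonal hξ, smul_eq_mul]

lemma star_vecTens_dotProduct_Ed0_mulVec_of_ne
    (hξ : ∀ i j, (∑ k, star (ξ i k) * ξ j k) = if i = j then 1 else 0) (hB : Bq lam ≠ 0)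
    {i j : Fin 2} (hij : i ≠ j) :
    star (vecTens (ξ i) (ξ i)) ⬝ᵥ Ed0 ξ lam a b *ᵥ vecTens (ξ j) (ξ j) =
      ((chiq lam * Bq lam : ℝ) : ℂ) := by
  have key := congrArg (fun r : ℝ => ((chiq lam * r : ℝ) : ℂ))
    (lamPlus_mul_add_lamMinus_mul lam a b hB)
  push_cast at key
  obtain ⟨rfl, rfl⟩ | ⟨rfl, rfl⟩ : (i = 0 ∧ j = 1) ∨ (i = 1 ∧ j = 0) := by
    fin_cases i <;> fin_cases j <;> simp_all
  all_goals
    simp only [star_vecTens_dotProduct_Ed0_mulVec hξ, diagonal_apply_eq, cons_val_zero,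
      cons_val_one, cons_val_fin_one, RCLike.star_def, Complex.conj_ofReal, Complex.ofReal_mul]
    linear_combination key

lemma flipWitness_Ed0
    (hξ : ∀ i j, (∑ k, star (ξ i k) * ξ j k) = if i = j then 1 else 0) (hB : Bq lam ≠ 0) :
    flipWitness (ξ 0) (ξ 1) (Ed0 ξ lam a b) = ((-2 * (chiq lam * Bq lam) : ℝ) : ℂ) := by
  rw [flipWitness, star_vecTens_dotProduct_Ed0_mulVec_of_ne hξ hB zero_ne_one,
    star_vecTens_dotProduct_Ed0_mulVec_of_ne hξ hB one_ne_zero,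
    star_vecTens_dotProduct_Ed0_mulVec hξ, star_vecTens_dotProduct_Ed0_mulVec hξ]
  simp only [diagonal_apply_ne _ zero_ne_one, diagonal_apply_ne _ one_ne_zero]
  push_cast
  ring

end EntriesOfEd0

theorem Ed0_entangled_general (ξ : Fin 2 → Fin 2 → ℂ)
    (hξ : ∀ i j, (∑ k, star (ξ i k) * ξ j k) = if i = j then 1 else 0)
    (lam : Fin 4 → ℝ) (hpos : ∀ i, 0 < lam i) (h14 : lam 3 < lam 0) (a b : ℝ) :
    (star (vecTens (ξ 1) (ξ 1)) ⬝ᵥ (Ed0 ξ lam a b).mulVec (vecTens (ξ 0) (ξ 0)) ≠ 0) ∧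
      Ed0 ξ lam a b ∉ SepCl := by
  have hB : 0 < Bq lam := sub_pos.2 h14
  have hχ : 0 < chiq lam := inv_pos.2 (by linarith [hpos 0, hpos 1, hpos 3])
  have hχB : 0 < chiq lam * Bq lam := mul_pos hχ hB
  refine ⟨?_, fun hsep => ?_⟩
  · rw [star_vecTens_dotProduct_Ed0_mulVec_of_ne hξ hB.ne' one_ne_zero]
    exact_mod_cast hχB.ne'
  · have hW := re_flipWitness_nonneg_of_mem_SepCl hsep (ξ 0) (ξ 1)
    rw [flipWitness_Ed0 hξ hB.ne', Complex.ofReal_re] at hW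
    linarith

/-- `⟨ξ2⊗ξ2, E^d_0(σ) ξ1⊗ξ1⟩ ≠ 0`, and `E^d_0(σ)` is not in the closed
convex hull of products of positive operators. -/
theorem Ed0_entangled (ξ : Fin 2 → Fin 2 → ℂ)
    (hξ : ∀ i j, (∑ k, star (ξ i k) * ξ j k) = if i = j then 1 else 0)
    (lam : Fin 4 → ℝ) (hpos : ∀ i, 0 < lam i) (hsum : ∑ i, lam i = 1)
    (h23 : lam 1 = lam 2) (h14 : lam 3 < lam 0)
    (a b : ℝ) (ha : 0 ≤ a) (hb : 0 ≤ b) (hab : a + b = 1)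
    (σI : Matrix (Fin 2) (Fin 2) ℂ) (hσI : σI.PosSemidef) (hσItr : σI.trace = 1) :
    (star (vecTens (ξ 1) (ξ 1)) ⬝ᵥ (Ed0 ξ lam a b).mulVec (vecTens (ξ 0) (ξ 0)) ≠ 0) ∧
      Ed0 ξ lam a b ∉ SepCl :=
  Ed0_entangled_general ξ hξ lam hpos h14 a b
end

section
/- Two-point correlation formula: let ρ be an invertible density matrix on H1⊗H2 with dim H1 = n, dim H2 = m, let {φ_k} be any orthonormal basis of H1 and {ϕ_j} an orthonormal basis of H2 diagonalizing Tr_1(ρ). Then for f = F⊗1, g = 1⊗G, one has Tr(ρ E(f) g) = Σ_{k,l,j,i} (Σ_{p,q} (ρ^{1/2})_{pkjq}(ρ^{1/2})_{lpqi} √(ã_j/ã_i)) ⟨φ_k|F|φ_l⟩⟨ϕ_i|G|ϕ_j⟩, where ã_j = Σ_r ρ_{rrjj} and ρ_{pqrs} = ⟨φ_p⊗ϕ_r|ρ|φ_q⊗ϕ_s⟩, (ρ^{1/2})_{pqrs} = ⟨φ_p⊗ϕ_r|ρ^{1/2}|φ_q⊗ϕ_s⟩. -/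
open Matrix Kronecker
open scoped ComplexOrder

/-- Matrix element `⟨φ_p⊗ϕ_r | M | φ_q⊗ϕ_s⟩` in a product basis. -/
noncomputable def mel {n m : ℕ} (φ : Fin n → Fin n → ℂ) (ϕ : Fin m → Fin m → ℂ)
    (M : Matrix (Fin n × Fin m) (Fin n × Fin m) ℂ) (p q : Fin n) (r s : Fin m) : ℂ :=
  star (vecTens (φ p) (ϕ r)) ⬝ᵥ M.mulVec (vecTens (φ q) (ϕ s))

lemma sum_ite_out {α M : Type*} [Fintype α] [AddCommMonoid M] (P : Prop) [Decidable P]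
    (f : α → M) :
    ∑ x : α, (if P then f x else 0) = if P then ∑ x : α, f x else 0 := by
  split <;> simp

lemma sum_rot3 {α β γ M : Type*} [Fintype α] [Fintype β] [Fintype γ] [AddCommMonoid M]
    (f : α → β → γ → M) :
    ∑ a, ∑ b, ∑ c, f a b c = ∑ b, ∑ c, ∑ a, f a b c := by
  rw [Finset.sum_comm]
  apply Finset.sum_congr rfl
  intro b _
  exact Finset.sum_comm

lemma kron_conjT {n m : ℕ} (A : Matrix (Fin n) (Fin n) ℂ) (B : Matrix (Fin m) (Fin m) ℂ) :
    (A ⊗ₖ B)ᴴ = Aᴴ ⊗ₖ Bᴴ := by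
  ext ⟨a, c⟩ ⟨b, d⟩
  simp [conjTranspose_apply, kroneckerMap_apply, mul_comm]

lemma ptrace1_sandwich {n m : ℕ} (A B : Matrix (Fin m) (Fin m) ℂ)
    (X : Matrix (Fin n × Fin m) (Fin n × Fin m) ℂ) :
    ptrace1 (((1 : Matrix (Fin n) (Fin n) ℂ) ⊗ₖ A) * X * ((1 : Matrix (Fin n) (Fin n) ℂ) ⊗ₖ B))
      = A * ptrace1 X * B := by
  ext j i
  simp only [ptrace1, Matrix.mul_apply, kroneckerMap_apply, Fintype.sum_prod_type,
    Matrix.one_apply, ite_mul, one_mul, zero_mul, mul_ite, mul_zero, mul_one,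
    sum_ite_out, Finset.sum_ite_eq, Finset.sum_ite_eq', Finset.mem_univ, if_true,
    Finset.mul_sum, Finset.sum_mul]
  rw [Finset.sum_comm]
  apply Finset.sum_congr rfl
  intro y _
  exact Finset.sum_comm

lemma ptrace1_sandwich_left {n m : ℕ} (A B : Matrix (Fin n) (Fin n) ℂ)
    (X : Matrix (Fin n × Fin m) (Fin n × Fin m) ℂ) :
    ptrace1 ((A ⊗ₖ (1 : Matrix (Fin m) (Fin m) ℂ)) * X * (B ⊗ₖ (1 : Matrix (Fin m) (Fin m) ℂ)))
      = ptrace1 (((B * A) ⊗ₖ (1 : Matrix (Fin m) (Fin m) ℂ)) * X) := by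
  ext j i
  simp only [ptrace1, Matrix.mul_apply, kroneckerMap_apply, Fintype.sum_prod_type,
    Matrix.one_apply, ite_mul, one_mul, zero_mul, mul_ite, mul_zero, mul_one,
    sum_ite_out, Finset.sum_ite_eq, Finset.sum_ite_eq', Finset.mem_univ, if_true,
    Finset.mul_sum, Finset.sum_mul]
  rw [sum_rot3]
  exact Finset.sum_congr rfl fun b _ => Finset.sum_congr rfl fun c _ =>
    Finset.sum_congr rfl fun a _ => by ring

lemma trace_mul_kron_one {n m : ℕ} (ρ : Matrix (Fin n × Fin m) (Fin n × Fin m) ℂ)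
    (C : Matrix (Fin m) (Fin m) ℂ) :
    (ρ * ((1 : Matrix (Fin n) (Fin n) ℂ) ⊗ₖ C)).trace = (ptrace1 ρ * C).trace := by
  simp only [Matrix.trace, Matrix.diag, Matrix.mul_apply, kroneckerMap_apply,
    Fintype.sum_prod_type, Matrix.one_apply, ite_mul, one_mul, zero_mul, mul_ite, mul_zero,
    mul_one, sum_ite_out, Finset.sum_ite_eq, Finset.sum_ite_eq', Finset.mem_univ, if_true,
    ptrace1, Finset.mul_sum, Finset.sum_mul]
  rw [sum_rot3]

lemma ptrace1_conj {n m : ℕ} (U : Matrix (Fin n) (Fin n) ℂ) (V : Matrix (Fin m) (Fin m) ℂ)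
    (hU : U * Uᴴ = 1) (X : Matrix (Fin n × Fin m) (Fin n × Fin m) ℂ) :
    ptrace1 ((U ⊗ₖ V)ᴴ * X * (U ⊗ₖ V)) = Vᴴ * ptrace1 X * V := by
  have hdec : U ⊗ₖ V = (U ⊗ₖ (1 : Matrix (Fin m) (Fin m) ℂ)) *
      ((1 : Matrix (Fin n) (Fin n) ℂ) ⊗ₖ V) := by
    rw [← Matrix.mul_kronecker_mul, Matrix.mul_one, Matrix.one_mul]
  have hdecH : (U ⊗ₖ V)ᴴ = ((1 : Matrix (Fin n) (Fin n) ℂ) ⊗ₖ Vᴴ) *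
      (Uᴴ ⊗ₖ (1 : Matrix (Fin m) (Fin m) ℂ)) := by
    rw [kron_conjT, ← Matrix.mul_kronecker_mul, Matrix.mul_one, Matrix.one_mul]
  rw [hdecH, hdec]
  have : ((1 : Matrix (Fin n) (Fin n) ℂ) ⊗ₖ Vᴴ) *
      (Uᴴ ⊗ₖ (1 : Matrix (Fin m) (Fin m) ℂ)) * X *
      ((U ⊗ₖ (1 : Matrix (Fin m) (Fin m) ℂ)) * ((1 : Matrix (Fin n) (Fin n) ℂ) ⊗ₖ V))
      = ((1 : Matrix (Fin n) (Fin n) ℂ) ⊗ₖ Vᴴ) *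
        ((Uᴴ ⊗ₖ (1 : Matrix (Fin m) (Fin m) ℂ)) * X * (U ⊗ₖ (1 : Matrix (Fin m) (Fin m) ℂ))) *
        ((1 : Matrix (Fin n) (Fin n) ℂ) ⊗ₖ V) := by
    simp only [Matrix.mul_assoc]
  rw [this, ptrace1_sandwich, ptrace1_sandwich_left, hU]
  congr 1
  congr 1
  ext j i
  simp [ptrace1, Matrix.one_kronecker_one, Matrix.one_mul]

lemma conj_entry {n : ℕ} (U F : Matrix (Fin n) (Fin n) ℂ) (φ : Fin n → Fin n → ℂ)
    (hU : ∀ a k, U a k = φ k a) (k l : Fin n) :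
    (Uᴴ * F * U) k l = star (φ k) ⬝ᵥ F.mulVec (φ l) := by
  simp only [Matrix.mul_apply, conjTranspose_apply, dotProduct, mulVec, hU,
    Finset.sum_mul, Finset.mul_sum, Pi.star_apply]
  rw [Finset.sum_comm]
  exact Finset.sum_congr rfl fun a _ => Finset.sum_congr rfl fun b _ => by ring

lemma diag_conj {m : ℕ} (V M : Matrix (Fin m) (Fin m) ℂ) (ϕ : Fin m → Fin m → ℂ)
    (hV : ∀ a u, V a u = ϕ u a) (hV1 : Vᴴ * V = 1) (c : Fin m → ℂ)
    (h : ∀ j, M.mulVec (ϕ j) = c j • ϕ j) :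
    Vᴴ * M * V = Matrix.diagonal c := by
  have hMV : M * V = V * Matrix.diagonal c := by
    ext a j
    rw [Matrix.mul_apply, Matrix.mul_diagonal, hV]
    have := congrFun (h j) a
    simp only [mulVec, dotProduct, Pi.smul_apply, smul_eq_mul] at this
    simp only [hV]
    rw [this]; ring
  rw [Matrix.mul_assoc, hMV, ← Matrix.mul_assoc, hV1, Matrix.one_mul]

lemma mel_eq_entry {n m : ℕ} (U : Matrix (Fin n) (Fin n) ℂ) (V : Matrix (Fin m) (Fin m) ℂ)
    (φ : Fin n → Fin n → ℂ) (ϕ : Fin m → Fin m → ℂ)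
    (hU : ∀ a k, U a k = φ k a) (hV : ∀ a u, V a u = ϕ u a)
    (M : Matrix (Fin n × Fin m) (Fin n × Fin m) ℂ) (p q : Fin n) (r s : Fin m) :
    mel φ ϕ M p q r s = ((U ⊗ₖ V)ᴴ * M * (U ⊗ₖ V)) (p, r) (q, s) := by
  simp only [mel, dotProduct, mulVec, vecTens, Matrix.mul_apply, conjTranspose_apply,
    kroneckerMap_apply, hU, hV, Pi.star_apply, star_mul', Finset.sum_mul, Finset.mul_sum]
  rw [Finset.sum_comm]
  apply Finset.sum_congr rfl
  intro x _
  apply Finset.sum_congr rfl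
  intro y _
  ring

lemma trace_diag_expand {m : ℕ} (u v : Fin m → ℂ) (M G : Matrix (Fin m) (Fin m) ℂ) :
    (Matrix.diagonal u * (Matrix.diagonal v * M * Matrix.diagonal v * G)).trace
      = ∑ j, ∑ i, u j * v j * M j i * v i * G i j := by
  simp only [Matrix.trace, Matrix.diag, Matrix.mul_apply, Matrix.diagonal_apply, ite_mul,
    zero_mul, mul_ite, mul_zero, sum_ite_out, Finset.sum_ite_eq, Finset.sum_ite_eq',
    Finset.mem_univ, if_true, Finset.sum_mul, Finset.mul_sum]
  apply Finset.sum_congr rfl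
  intro j _
  apply Finset.sum_congr rfl
  intro i _
  ring

lemma ptrace1_sFs {n m : ℕ} (s' t' : Matrix (Fin n × Fin m) (Fin n × Fin m) ℂ)
    (F : Matrix (Fin n) (Fin n) ℂ) (j i : Fin m) :
    ptrace1 (s' * (F ⊗ₖ (1 : Matrix (Fin m) (Fin m) ℂ)) * t') j i
      = ∑ p : Fin n, ∑ k : Fin n, ∑ q : Fin m, ∑ l : Fin n,
          s' (p, j) (k, q) * F k l * t' (l, q) (p, i) := by
  simp only [ptrace1, Matrix.mul_apply, kroneckerMap_apply, Fintype.sum_prod_type,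
    Matrix.one_apply, ite_mul, one_mul, zero_mul, mul_ite, mul_zero, mul_one,
    sum_ite_out, Finset.sum_ite_eq, Finset.sum_ite_eq', Finset.mem_univ, if_true,
    Finset.sum_mul, Finset.mul_sum]
  apply Finset.sum_congr rfl
  intro p _
  rw [sum_rot3, sum_rot3]
  apply Finset.sum_congr rfl
  intro k _
  exact Finset.sum_comm

lemma sum_reorder6 {n m : ℕ} {M : Type*} [AddCommMonoid M]
    (f : Fin n → Fin n → Fin m → Fin m → Fin n → Fin m → M) :
    ∑ k, ∑ l, ∑ j, ∑ i, ∑ p, ∑ q, f k l j i p q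
      = ∑ j, ∑ i, ∑ p, ∑ k, ∑ q, ∑ l, f k l j i p q := by
  trans ∑ x : Fin n × Fin n × Fin m × Fin m × Fin n × Fin m,
      f x.1 x.2.1 x.2.2.1 x.2.2.2.1 x.2.2.2.2.1 x.2.2.2.2.2
  · simp [Fintype.sum_prod_type]
  trans ∑ y : Fin m × Fin m × Fin n × Fin n × Fin m × Fin n,
      f y.2.2.2.1 y.2.2.2.2.2 y.1 y.2.1 y.2.2.1 y.2.2.2.2.1
  · exact (Equiv.sum_comp
      (⟨fun y => (y.2.2.2.1, y.2.2.2.2.2, y.1, y.2.1, y.2.2.1, y.2.2.2.2.1),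
        fun x => (x.2.2.1, x.2.2.2.1, x.2.2.2.2.1, x.1, x.2.2.2.2.2, x.2.1),
        fun y => rfl, fun x => rfl⟩ :
        (Fin m × Fin m × Fin n × Fin n × Fin m × Fin n) ≃
          (Fin n × Fin n × Fin m × Fin m × Fin n × Fin m))
      (fun x => f x.1 x.2.1 x.2.2.1 x.2.2.2.1 x.2.2.2.2.1 x.2.2.2.2.2)).symm
  · simp [Fintype.sum_prod_type]

lemma scalar_fact {a b : ℝ} (ha : 0 < a) (hb : 0 < b) :
    ((a : ℝ) : ℂ) * (((Real.sqrt a)⁻¹ : ℝ) : ℂ) * (((Real.sqrt b)⁻¹ : ℝ) : ℂ)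
      = ((Real.sqrt (a / b) : ℝ) : ℂ) := by
  rw [← Complex.ofReal_mul, ← Complex.ofReal_mul]
  congr 1
  rw [Real.sqrt_div ha.le, div_eq_mul_inv]
  congr 1
  rw [← div_eq_mul_inv]
  exact Real.div_sqrt

lemma eigen_sqrt_inv {m : ℕ} (w A : Matrix (Fin m) (Fin m) ℂ) (hw : w.PosSemidef)
    (hww : w * w * A = 1) (x : Fin m → ℂ) (a : ℝ) (ha : 0 < a)
    (hx : A.mulVec x = ((a : ℝ) : ℂ) • x) :
    w.mulVec x = (((Real.sqrt a)⁻¹ : ℝ) : ℂ) • x := by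
  set r : ℝ := (Real.sqrt a)⁻¹ with hr
  have hrpos : 0 < r := inv_pos.mpr (Real.sqrt_pos.mpr ha)
  set lam : ℂ := ((r : ℝ) : ℂ) with hlam
  have hlam_sq : lam * lam = ((a : ℝ) : ℂ)⁻¹ := by
    rw [hlam, ← Complex.ofReal_mul, ← Complex.ofReal_inv]
    congr 1
    rw [hr, ← mul_inv, Real.mul_self_sqrt ha.le]
  have hane : ((a : ℝ) : ℂ) ≠ 0 := by
    simpa using ha.ne'
  have h1 : (w * w * A) *ᵥ x = x := by rw [hww, Matrix.one_mulVec]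
  rw [← Matrix.mulVec_mulVec, hx, Matrix.mulVec_smul] at h1
  have h2 : (w * w) *ᵥ x = ((a : ℝ) : ℂ)⁻¹ • x := by
    rw [eq_comm, inv_smul_eq_iff₀ hane]
    exact h1.symm
  set y : Fin m → ℂ := w *ᵥ x - lam • x with hy
  have hwy : w *ᵥ y = (-lam) • y := by
    rw [hy, Matrix.mulVec_sub, Matrix.mulVec_smul, Matrix.mulVec_mulVec, h2, ← hlam_sq]
    module
  have hpos : 0 ≤ star y ⬝ᵥ w *ᵥ y := hw.dotProduct_mulVec_nonneg y
  have hnn : 0 ≤ star y ⬝ᵥ y := dotProduct_star_self_nonneg y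
  have hdot : star y ⬝ᵥ w *ᵥ y = (-lam) * (star y ⬝ᵥ y) := by
    rw [hwy, dotProduct_smul, smul_eq_mul]
  have hzero : star y ⬝ᵥ y = 0 := by
    set t : ℂ := star y ⬝ᵥ y with ht
    rw [hdot] at hpos
    rw [Complex.le_def] at hpos hnn
    have him : t.im = 0 := (hnn.2).symm
    have hre1 : 0 ≤ t.re := by simpa using hnn.1
    have hre2 : 0 ≤ (-lam * t).re := by simpa using hpos.1
    have : (-lam * t).re = -r * t.re := by
      simp [hlam, Complex.mul_re, him]
    rw [this] at hre2
    have : t.re ≤ 0 := by nlinarith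
    have hte : t.re = 0 := le_antisymm this hre1
    exact Complex.ext hte him
  have hy0 : y = 0 := dotProduct_star_self_eq_zero.mp hzero
  rw [hy, sub_eq_zero] at hy0
  exact hy0

lemma conj_mul2 {d : Type*} [Fintype d] [DecidableEq d] (W A B : Matrix d d ℂ)
    (hW2 : W * Wᴴ = 1) :
    (Wᴴ * A * W) * (Wᴴ * B * W) = Wᴴ * (A * B) * W := by
  have hWX : ∀ X : Matrix d d ℂ, W * (Wᴴ * X) = X := fun X => by
    rw [← Matrix.mul_assoc, hW2, Matrix.one_mul]
  simp only [Matrix.mul_assoc, hWX]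

lemma conj_mul3 {d : Type*} [Fintype d] [DecidableEq d] (W A B C : Matrix d d ℂ)
    (hW2 : W * Wᴴ = 1) :
    (Wᴴ * A * W) * (Wᴴ * B * W) * (Wᴴ * C * W) = Wᴴ * (A * B * C) * W := by
  have hWX : ∀ X : Matrix d d ℂ, W * (Wᴴ * X) = X := fun X => by
    rw [← Matrix.mul_assoc, hW2, Matrix.one_mul]
  simp only [Matrix.mul_assoc, hWX]

lemma trace_conj {d : Type*} [Fintype d] [DecidableEq d] (W X : Matrix d d ℂ)
    (hW2 : W * Wᴴ = 1) : (Wᴴ * X * W).trace = X.trace := by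
  rw [Matrix.trace_mul_cycle, hW2, Matrix.one_mul]


/-- the two-point correlation formula
`Tr(ρ E(F⊗1)(1⊗G)) = Σ_{klji} (Σ_{pq} (ρ^{1/2})_{pkjq}(ρ^{1/2})_{lpqi} √(ã_j/ã_i))
⟨φ_k|F|φ_l⟩ ⟨ϕ_i|G|ϕ_j⟩`. -/
theorem correlation_formula {n m : ℕ}
    (ρ s : Matrix (Fin n × Fin m) (Fin n × Fin m) ℂ) (w : Matrix (Fin m) (Fin m) ℂ)
    (hρ : ρ.PosDef) (htr : ρ.trace = 1)
    (hs : s.PosSemidef) (hss : s * s = ρ)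
    (hw : w.PosSemidef) (hww : w * w * ptrace1 ρ = 1)
    (φ : Fin n → Fin n → ℂ)
    (hφ : ∀ i j, (∑ k, star (φ i k) * φ j k) = if i = j then 1 else 0)
    (ϕ : Fin m → Fin m → ℂ)
    (hϕ : ∀ i j, (∑ k, star (ϕ i k) * ϕ j k) = if i = j then 1 else 0)
    (am : Fin m → ℝ) (hapos : ∀ j, 0 < am j)
    (heig : ∀ j, (ptrace1 ρ).mulVec (ϕ j) = ((am j : ℝ) : ℂ) • ϕ j)
    (haval : ∀ j, ((am j : ℝ) : ℂ) = ∑ r : Fin n, mel φ ϕ ρ r r j j) :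
    ∀ (F : Matrix (Fin n) (Fin n) ℂ) (G : Matrix (Fin m) (Fin m) ℂ),
      (ρ * Emap s w (F ⊗ₖ (1 : Matrix (Fin m) (Fin m) ℂ)) *
          ((1 : Matrix (Fin n) (Fin n) ℂ) ⊗ₖ G)).trace =
        ∑ k : Fin n, ∑ l : Fin n, ∑ j : Fin m, ∑ i : Fin m,
          (∑ p : Fin n, ∑ q : Fin m,
              mel φ ϕ s p k j q * mel φ ϕ s l p q i *
                ((Real.sqrt (am j / am i) : ℝ) : ℂ)) *
            (star (φ k) ⬝ᵥ F.mulVec (φ l)) * (star (ϕ i) ⬝ᵥ G.mulVec (ϕ j)) := by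
  intro F G
  classical
  set U : Matrix (Fin n) (Fin n) ℂ := Matrix.of fun a k => φ k a with hUdef
  set V : Matrix (Fin m) (Fin m) ℂ := Matrix.of fun a u => ϕ u a with hVdef
  have hUe : ∀ a k, U a k = φ k a := fun a k => rfl
  have hVe : ∀ a u, V a u = ϕ u a := fun a u => rfl
  have hU1 : Uᴴ * U = 1 := by
    ext k l
    simp only [Matrix.mul_apply, conjTranspose_apply, hUe, Matrix.one_apply]
    simpa using hφ k l
  have hV1 : Vᴴ * V = 1 := by
    ext k l
    simp only [Matrix.mul_apply, conjTranspose_apply, hVe, Matrix.one_apply]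
    simpa using hϕ k l
  have hU2 : U * Uᴴ = 1 := mul_eq_one_comm.mp hU1
  have hV2 : V * Vᴴ = 1 := mul_eq_one_comm.mp hV1
  have hW1 : (U ⊗ₖ V)ᴴ * (U ⊗ₖ V) = 1 := by
    rw [kron_conjT, ← Matrix.mul_kronecker_mul, hU1, hV1, Matrix.one_kronecker_one]
  have hW2 : (U ⊗ₖ V) * (U ⊗ₖ V)ᴴ = 1 := mul_eq_one_comm.mp hW1
  have hwv : ∀ j, w.mulVec (ϕ j) = (((Real.sqrt (am j))⁻¹ : ℝ) : ℂ) • ϕ j := fun j =>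
    eigen_sqrt_inv w (ptrace1 ρ) hw hww (ϕ j) (am j) (hapos j) (heig j)
  have hDw : Vᴴ * w * V = Matrix.diagonal (fun j => (((Real.sqrt (am j))⁻¹ : ℝ) : ℂ)) :=
    diag_conj V w ϕ hVe hV1 _ hwv
  have hDA : Vᴴ * ptrace1 ρ * V = Matrix.diagonal (fun j => ((am j : ℝ) : ℂ)) :=
    diag_conj V (ptrace1 ρ) ϕ hVe hV1 _ heig
  set D : Matrix (Fin m) (Fin m) ℂ :=
    Matrix.diagonal (fun j => (((Real.sqrt (am j))⁻¹ : ℝ) : ℂ)) with hDdef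
  have hDH : Dᴴ = D := by
    have hst : (star fun j : Fin m => (((Real.sqrt (am j))⁻¹ : ℝ) : ℂ))
        = fun j : Fin m => (((Real.sqrt (am j))⁻¹ : ℝ) : ℂ) := by
      funext j
      simp [Pi.star_apply, Complex.conj_ofReal]
    rw [hDdef, Matrix.diagonal_conjTranspose, hst]
  set s' : Matrix (Fin n × Fin m) (Fin n × Fin m) ℂ := (U ⊗ₖ V)ᴴ * s * (U ⊗ₖ V) with hs'def
  set F' : Matrix (Fin n) (Fin n) ℂ := Uᴴ * F * U with hF'def
  set G' : Matrix (Fin m) (Fin m) ℂ := Vᴴ * G * V with hG'def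
  have hsH : sᴴ = s := hs.isHermitian
  have hs'H : s'ᴴ = s' := by
    rw [hs'def]
    simp only [conjTranspose_mul, conjTranspose_conjTranspose, hsH, Matrix.mul_assoc]
  have hWw : (U ⊗ₖ V)ᴴ * ((1 : Matrix (Fin n) (Fin n) ℂ) ⊗ₖ w) * (U ⊗ₖ V)
      = (1 : Matrix (Fin n) (Fin n) ℂ) ⊗ₖ D := by
    rw [kron_conjT, ← Matrix.mul_kronecker_mul, ← Matrix.mul_kronecker_mul, Matrix.mul_one,
      hU1, hDw]
  have hWF : (U ⊗ₖ V)ᴴ * (F ⊗ₖ (1 : Matrix (Fin m) (Fin m) ℂ)) * (U ⊗ₖ V)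
      = F' ⊗ₖ (1 : Matrix (Fin m) (Fin m) ℂ) := by
    rw [kron_conjT, ← Matrix.mul_kronecker_mul, ← Matrix.mul_kronecker_mul, Matrix.mul_one,
      hV1, hF'def]
  have hWG : (U ⊗ₖ V)ᴴ * ((1 : Matrix (Fin n) (Fin n) ℂ) ⊗ₖ G) * (U ⊗ₖ V)
      = (1 : Matrix (Fin n) (Fin n) ℂ) ⊗ₖ G' := by
    rw [kron_conjT, ← Matrix.mul_kronecker_mul, ← Matrix.mul_kronecker_mul, Matrix.mul_one,
      hU1, hG'def]
  have hγ : (U ⊗ₖ V)ᴴ * gammaOp s w * (U ⊗ₖ V)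
      = s' * ((1 : Matrix (Fin n) (Fin n) ℂ) ⊗ₖ D) := by
    rw [show gammaOp s w = s * ((1 : Matrix (Fin n) (Fin n) ℂ) ⊗ₖ w) from rfl,
      ← conj_mul2 _ _ _ hW2, hWw, hs'def]
  have hγH : ((U ⊗ₖ V)ᴴ * gammaOp s w * (U ⊗ₖ V))ᴴ
      = ((1 : Matrix (Fin n) (Fin n) ℂ) ⊗ₖ D) * s' := by
    rw [hγ, conjTranspose_mul, hs'H, kron_conjT, Matrix.conjTranspose_one, hDH]
  set Mmid : Matrix (Fin m) (Fin m) ℂ :=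
    ptrace1 (s' * (F' ⊗ₖ (1 : Matrix (Fin m) (Fin m) ℂ)) * s') with hMmid
  have hγH2 : (U ⊗ₖ V)ᴴ * (gammaOp s w)ᴴ * (U ⊗ₖ V)
      = ((1 : Matrix (Fin n) (Fin n) ℂ) ⊗ₖ D) * s' := by
    have h0 : (U ⊗ₖ V)ᴴ * (gammaOp s w)ᴴ * (U ⊗ₖ V)
        = ((U ⊗ₖ V)ᴴ * gammaOp s w * (U ⊗ₖ V))ᴴ := by
      simp only [conjTranspose_mul, conjTranspose_conjTranspose, Matrix.mul_assoc]
    rw [h0, hγ, conjTranspose_mul, hs'H, kron_conjT, Matrix.conjTranspose_one, hDH]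
  have hE : (U ⊗ₖ V)ᴴ * Emap s w (F ⊗ₖ (1 : Matrix (Fin m) (Fin m) ℂ)) * (U ⊗ₖ V)
      = (1 : Matrix (Fin n) (Fin n) ℂ) ⊗ₖ (D * Mmid * D) := by
    rw [show Emap s w (F ⊗ₖ (1 : Matrix (Fin m) (Fin m) ℂ))
        = (1 : Matrix (Fin n) (Fin n) ℂ) ⊗ₖ ptrace1 ((gammaOp s w)ᴴ *
            (F ⊗ₖ (1 : Matrix (Fin m) (Fin m) ℂ)) * gammaOp s w) from rfl]
    rw [kron_conjT, ← Matrix.mul_kronecker_mul, ← Matrix.mul_kronecker_mul, Matrix.mul_one,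
      hU1]
    rw [← ptrace1_conj U V hU2, ← conj_mul3 _ _ _ _ hW2, hγH2, hWF, hγ]
    have hassoc : ((1 : Matrix (Fin n) (Fin n) ℂ) ⊗ₖ D) * s' *
        (F' ⊗ₖ (1 : Matrix (Fin m) (Fin m) ℂ)) *
        (s' * ((1 : Matrix (Fin n) (Fin n) ℂ) ⊗ₖ D))
        = ((1 : Matrix (Fin n) (Fin n) ℂ) ⊗ₖ D) *
          (s' * (F' ⊗ₖ (1 : Matrix (Fin m) (Fin m) ℂ)) * s') *
          ((1 : Matrix (Fin n) (Fin n) ℂ) ⊗ₖ D) := by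
      simp only [Matrix.mul_assoc]
    rw [hassoc, ptrace1_sandwich, hMmid]
  set ρ' : Matrix (Fin n × Fin m) (Fin n × Fin m) ℂ := (U ⊗ₖ V)ᴴ * ρ * (U ⊗ₖ V) with hρ'def
  have hρ'tr : ptrace1 ρ' = Matrix.diagonal (fun j => ((am j : ℝ) : ℂ)) := by
    rw [hρ'def, ptrace1_conj U V hU2, hDA]
  have hTr : (ρ * Emap s w (F ⊗ₖ (1 : Matrix (Fin m) (Fin m) ℂ)) *
      ((1 : Matrix (Fin n) (Fin n) ℂ) ⊗ₖ G)).trace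
      = ∑ j, ∑ i, ((am j : ℝ) : ℂ) * (((Real.sqrt (am j))⁻¹ : ℝ) : ℂ) * Mmid j i *
          (((Real.sqrt (am i))⁻¹ : ℝ) : ℂ) * G' i j := by
    calc (ρ * Emap s w (F ⊗ₖ (1 : Matrix (Fin m) (Fin m) ℂ)) *
        ((1 : Matrix (Fin n) (Fin n) ℂ) ⊗ₖ G)).trace
        = ((U ⊗ₖ V)ᴴ * (ρ * Emap s w (F ⊗ₖ (1 : Matrix (Fin m) (Fin m) ℂ)) *
            ((1 : Matrix (Fin n) (Fin n) ℂ) ⊗ₖ G)) * (U ⊗ₖ V)).trace :=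
          (trace_conj _ _ hW2).symm
      _ = (ρ' * ((1 : Matrix (Fin n) (Fin n) ℂ) ⊗ₖ (D * Mmid * D)) *
            ((1 : Matrix (Fin n) (Fin n) ℂ) ⊗ₖ G')).trace := by
          rw [← conj_mul3 _ _ _ _ hW2, hE, hWG]
      _ = (ρ' * ((1 : Matrix (Fin n) (Fin n) ℂ) ⊗ₖ (D * Mmid * D * G'))).trace := by
          rw [Matrix.mul_assoc, ← Matrix.mul_kronecker_mul, Matrix.one_mul]
      _ = (ptrace1 ρ' * (D * Mmid * D * G')).trace := trace_mul_kron_one _ _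
      _ = (Matrix.diagonal (fun j => ((am j : ℝ) : ℂ)) * (D * Mmid * D * G')).trace := by
          rw [hρ'tr]
      _ = ∑ j, ∑ i, ((am j : ℝ) : ℂ) * (((Real.sqrt (am j))⁻¹ : ℝ) : ℂ) * Mmid j i *
            (((Real.sqrt (am i))⁻¹ : ℝ) : ℂ) * G' i j := trace_diag_expand _ _ _ _
  rw [hTr]
  have hmel : ∀ p k j q, mel φ ϕ s p k j q = s' (p, j) (k, q) := fun p k j q =>
    mel_eq_entry U V φ ϕ hUe hVe s p k j q
  have hFb : ∀ k l, star (φ k) ⬝ᵥ F.mulVec (φ l) = F' k l := fun k l =>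
    (conj_entry U F φ hUe k l).symm
  have hGb : ∀ i j, star (ϕ i) ⬝ᵥ G.mulVec (ϕ j) = G' i j := fun i j =>
    (conj_entry V G ϕ hVe i j).symm
  have hMexp : ∀ j i, Mmid j i
      = ∑ p, ∑ k, ∑ q, ∑ l, s' (p, j) (k, q) * F' k l * s' (l, q) (p, i) := fun j i =>
    ptrace1_sFs s' s' F' j i
  simp only [hmel, hFb, hGb]
  calc ∑ j, ∑ i, ((am j : ℝ) : ℂ) * (((Real.sqrt (am j))⁻¹ : ℝ) : ℂ) * Mmid j i *
        (((Real.sqrt (am i))⁻¹ : ℝ) : ℂ) * G' i j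
      = ∑ j, ∑ i, ∑ p, ∑ k, ∑ q, ∑ l,
          s' (p, j) (k, q) * s' (l, q) (p, i) *
            (((am j : ℝ) : ℂ) * (((Real.sqrt (am j))⁻¹ : ℝ) : ℂ) *
              (((Real.sqrt (am i))⁻¹ : ℝ) : ℂ)) * F' k l * G' i j := by
        apply Finset.sum_congr rfl
        intro j _
        apply Finset.sum_congr rfl
        intro i _
        rw [hMexp j i]
        simp only [Finset.sum_mul, Finset.mul_sum]
        apply Finset.sum_congr rfl
        intro p _
        apply Finset.sum_congr rfl
        intro k _
        apply Finset.sum_congr rfl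
        intro q _
        apply Finset.sum_congr rfl
        intro l _
        ring
    _ = ∑ j, ∑ i, ∑ p, ∑ k, ∑ q, ∑ l,
          s' (p, j) (k, q) * s' (l, q) (p, i) *
            ((Real.sqrt (am j / am i) : ℝ) : ℂ) * F' k l * G' i j := by
        apply Finset.sum_congr rfl
        intro j _
        apply Finset.sum_congr rfl
        intro i _
        apply Finset.sum_congr rfl
        intro p _
        apply Finset.sum_congr rfl
        intro k _
        apply Finset.sum_congr rfl
        intro q _
        apply Finset.sum_congr rfl
        intro l _
        rw [scalar_fact (hapos j) (hapos i)]
    _ = ∑ k, ∑ l, ∑ j, ∑ i, ∑ p, ∑ q,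
          s' (p, j) (k, q) * s' (l, q) (p, i) *
            ((Real.sqrt (am j / am i) : ℝ) : ℂ) * F' k l * G' i j :=
        (sum_reorder6 (fun k l j i p q =>
          s' (p, j) (k, q) * s' (l, q) (p, i) *
            ((Real.sqrt (am j / am i) : ℝ) : ℂ) * F' k l * G' i j)).symm
    _ = ∑ k, ∑ l, ∑ j, ∑ i,
          (∑ p, ∑ q, s' (p, j) (k, q) * s' (l, q) (p, i) *
              ((Real.sqrt (am j / am i) : ℝ) : ℂ)) * F' k l * G' i j := by
        apply Finset.sum_congr rfl
        intro k _
        apply Finset.sum_congr rfl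
        intro l _
        apply Finset.sum_congr rfl
        intro j _
        apply Finset.sum_congr rfl
        intro i _
        simp only [Finset.sum_mul]
end
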